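/- Let Δ be a 3-dimensional normal simplicial pseudo manifold. Then its Euler characteristic is nonnegative: χ(Δ) ≥ 0. -/

import Mathlib

open Finset

variable {V : Type*} [DecidableEq V]

/-- A finite abstract simplicial complex: a finite collection of finite subsets
closed under taking subsets. -/
def IsComplex (Δ : Finset (Finset V)) : Prop :=
  ∀ σ ∈ Δ, ∀ τ ⊆ σ, τ ∈ Δ

/-- The link of a simplex `τ`. -/
def lkS (Δ : Finset (Finset V)) (τ : Finset V) : Finset (Finset V) :=
  Δ.filter fun σ => σ ∩ τ = ∅ ∧ σ ∪ τ ∈ Δ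

/-- The link of a vertex `v`. -/
def lk (Δ : Finset (Finset V)) (v : V) : Finset (Finset V) :=
  Δ.filter fun σ => v ∉ σ ∧ insert v σ ∈ Δ

/-- The closed star of a vertex `v`. -/
def closedStar (Δ : Finset (Finset V)) (v : V) : Finset (Finset V) :=
  Δ.filter fun σ => insert v σ ∈ Δ

/-- The deletion of a vertex `v`. -/
def deletion (Δ : Finset (Finset V)) (v : V) : Finset (Finset V) :=
  Δ.filter fun σ => v ∉ σ

/-- Number of simplices of cardinality `p` (i.e. of dimension `p - 1`). -/
def fm (Δ : Finset (Finset V)) (p : ℕ) : ℕ :=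
  (Δ.filter fun σ => σ.card = p).card

/-- Number of simplices of dimension `p` (i.e. of cardinality `p + 1`). -/
def fdim (Δ : Finset (Finset V)) (p : ℕ) : ℕ := fm Δ (p + 1)

/-- Euler characteristic `χ(Δ) = Σ_{p ≥ 0} (-1)^p f^p(Δ)` (empty simplex excluded). -/
def chi (Δ : Finset (Finset V)) : ℤ :=
  ∑ σ ∈ Δ.filter (fun σ => σ ≠ ∅), (-1 : ℤ) ^ (σ.card - 1)

/-- The vertex set of a complex. -/
def verts (Δ : Finset (Finset V)) : Finset V := Δ.biUnion id

/-- `Δ` is pure of dimension `n`: every simplex is a face of some `n`-simplex. -/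
def IsPure (Δ : Finset (Finset V)) (n : ℕ) : Prop :=
  ∀ σ ∈ Δ, ∃ ρ ∈ Δ, σ ⊆ ρ ∧ ρ.card = n + 1

/-- `Δ` is non-branching in dimension `n`: every `(n-1)`-simplex (cardinality `n`)
is a face of exactly two `n`-simplices (cardinality `n+1`). -/
def NonBranching (Δ : Finset (Finset V)) (n : ℕ) : Prop :=
  ∀ σ ∈ Δ, σ.card = n → (Δ.filter fun ρ => ρ.card = n + 1 ∧ σ ⊆ ρ).card = 2

/-- Two `n`-simplices are adjacent if they share an `(n-1)`-face. -/
def adjFacet (Δ : Finset (Finset V)) (n : ℕ) (σ ρ : Finset V) : Prop :=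
  σ ∈ Δ ∧ ρ ∈ Δ ∧ σ.card = n + 1 ∧ ρ.card = n + 1 ∧ (σ ∩ ρ).card = n

/-- Strong connectivity: any two `n`-simplices are joined by a chain of `n`-simplices,
consecutive ones sharing an `(n-1)`-face. -/
def StronglyConnected (Δ : Finset (Finset V)) (n : ℕ) : Prop :=
  ∀ σ ∈ Δ, σ.card = n + 1 → ∀ ρ ∈ Δ, ρ.card = n + 1 →
    Relation.ReflTransGen (adjFacet Δ n) σ ρ

/-- An `n`-dimensional simplicial pseudo manifold. -/
def PseudoManifold (Δ : Finset (Finset V)) (n : ℕ) : Prop :=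
  IsComplex Δ ∧ IsPure Δ n ∧ NonBranching Δ n ∧ StronglyConnected Δ n

/-- Normality for a 3-dimensional pseudo manifold: all vertex links are
2-dimensional pseudo manifolds. -/
def Normal3 (Δ : Finset (Finset V)) : Prop :=
  ∀ v ∈ verts Δ, PseudoManifold (lk Δ v) 2

/-!
Write `fᵢ` for the number of `i`-simplices. Counting the simplices through each vertex gives
`∑ᵥ χ(lk v) = 2 f₁ - 3 f₂ + 4 f₃`, and non-branching gives `2 f₂ = 4 f₃`. Every vertex link is a
2-dimensional pseudo manifold, and such a complex has `χ ≤ 2`: over `𝔽₂`, strong connectivity makes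
both `H₀` and `H₂` at most one-dimensional, so `χ = b₀ - b₁ + b₂ ≤ 2`. Hence
`2 χ(Δ) = 2 f₀ - 2 f₁ + 2 f₂ - 2 f₃ ≥ ∑ᵥ χ(lk v) - 2 f₁ + 2 f₂ - 2 f₃ = 2 f₃ - f₂ = 0`.
-/

abbrev faces (S : Finset (Finset V)) (p : ℕ) : Finset (Finset V) := S.filter fun σ => σ.card = p

theorem IsPure.card_le {V : Type*} {S : Finset (Finset V)} {n : ℕ} (hpure : IsPure S n)
    {σ : Finset V} (hσ : σ ∈ S) : σ.card ≤ n + 1 := by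
  obtain ⟨ρ, -, hσρ, hρ⟩ := hpure σ hσ
  exact hρ ▸ card_le_card hσρ

theorem sum_comp_card_eq_sum_fm {V : Type*} {S : Finset (Finset V)} {N : ℕ}
    (hN : ∀ σ ∈ S, σ.card ≤ N) (g : ℕ → ℤ) :
    ∑ σ ∈ S, g σ.card = ∑ p ∈ range (N + 1), (fm S p : ℤ) * g p := by
  rw [← sum_fiberwise_of_maps_to (g := card) (t := range (N + 1))
    fun σ hσ => mem_range.2 (Nat.lt_succ_of_le (hN σ hσ))]
  refine sum_congr rfl fun p _ => ?_
  rw [sum_congr rfl fun σ hσ => by rw [(mem_filter.1 hσ).2], sum_const, nsmul_eq_mul, fm]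

theorem chi_eq_sum_fm {S : Finset (Finset V)} {N : ℕ} (hN : ∀ σ ∈ S, σ.card ≤ N) :
    chi S = ∑ p ∈ range (N + 1), (fm S p : ℤ) * if p = 0 then 0 else (-1) ^ (p - 1) := by
  rw [chi, sum_filter, ← sum_comp_card_eq_sum_fm hN]
  refine sum_congr rfl fun σ _ => ?_
  simp only [ne_eq, ← card_eq_zero]
  split_ifs <;> rfl

theorem card_verts_eq_fm_one {S : Finset (Finset V)} (hS : IsComplex S) :
    (verts S).card = fm S 1 := by
  refine card_bij (fun v _ => {v}) (fun v hv => ?_) (fun _ _ _ _ => singleton_inj.1) ?_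
  · obtain ⟨σ, hσ, hvσ⟩ := mem_biUnion.1 hv
    exact mem_filter.2 ⟨hS σ hσ _ (singleton_subset_iff.2 hvσ), card_singleton v⟩
  · intro σ hσ
    obtain ⟨hσS, hσc⟩ := mem_filter.1 hσ
    obtain ⟨u, rfl⟩ := card_eq_one.1 hσc
    exact ⟨u, mem_biUnion.2 ⟨{u}, hσS, mem_singleton_self u⟩, rfl⟩

theorem fm_mul_two_eq {S : Finset (Finset V)} {n : ℕ} (hS : IsComplex S)
    (hnb : NonBranching S n) : fm S n * 2 = fm S (n + 1) * (n + 1) := by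
  refine card_mul_eq_card_mul (· ⊆ ·) (fun τ hτ => ?_) fun ρ hρ => ?_
  · obtain ⟨hτS, hτc⟩ := mem_filter.1 hτ
    rw [bipartiteAbove, filter_filter, ← hnb τ hτS hτc]
  · obtain ⟨hρS, hρc⟩ := mem_filter.1 hρ
    have : bipartiteBelow (· ⊆ ·) (faces S n) ρ = ρ.powersetCard n := by
      ext σ
      simp only [bipartiteBelow, mem_filter, mem_powersetCard]
      exact ⟨fun ⟨⟨_, hc⟩, hsub⟩ => ⟨hsub, hc⟩, fun ⟨hsub, hc⟩ => ⟨⟨hS ρ hρS σ hsub, hc⟩, hsub⟩⟩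
    rw [this, card_powersetCard, hρc, Nat.choose_succ_self_right]

theorem chi_lk {S : Finset (Finset V)} (hS : IsComplex S) (v : V) :
    chi (lk S v) = ∑ τ ∈ S with v ∈ τ ∧ 2 ≤ τ.card, (-1 : ℤ) ^ (τ.card - 2) := by
  refine sum_bij' (fun σ _ => insert v σ) (fun τ _ => τ.erase v) ?_ ?_ ?_ ?_ ?_
  · intro σ hσ
    simp only [lk, mem_filter] at hσ
    obtain ⟨⟨-, hvσ, hins⟩, hσne⟩ := hσ
    have := card_pos.2 (nonempty_iff_ne_empty.2 hσne)
    exact mem_filter.2 ⟨hins, mem_insert_self _ _, by rw [card_insert_of_notMem hvσ]; omega⟩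
  · intro τ hτ
    obtain ⟨hτS, hvτ, hτc⟩ := mem_filter.1 hτ
    refine mem_filter.2 ⟨mem_filter.2 ⟨hS τ hτS _ (erase_subset v τ), notMem_erase v τ,
      by rwa [insert_erase hvτ]⟩, ?_⟩
    rw [← nonempty_iff_ne_empty, ← card_pos, card_erase_of_mem hvτ]
    omega
  · intro σ hσ
    exact erase_insert (mem_filter.1 (mem_filter.1 hσ).1).2.1
  · intro τ hτ
    exact insert_erase (mem_filter.1 hτ).2.1
  · intro σ hσ
    rw [card_insert_of_notMem (mem_filter.1 (mem_filter.1 hσ).1).2.1]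
    rfl

theorem sum_chi_lk {S : Finset (Finset V)} (hS : IsComplex S) :
    ∑ v ∈ verts S, chi (lk S v) =
      ∑ τ ∈ S with 2 ≤ τ.card, (τ.card : ℤ) * (-1) ^ (τ.card - 2) := by
  simp_rw [chi_lk hS]
  rw [sum_comm' (t' := S.filter fun τ => 2 ≤ τ.card) (s' := id)]
  · simp only [id, sum_const, nsmul_eq_mul]
  · intro v τ
    simp only [verts, mem_filter, mem_biUnion, id]
    exact ⟨fun ⟨_, hτ, hvτ, hc⟩ => ⟨hvτ, hτ, hc⟩, fun ⟨hvτ, hτ, hc⟩ => ⟨⟨τ, hτ, hvτ⟩, hτ, hvτ, hc⟩⟩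

/-- Like `fm`, chains are indexed by the number of vertices: `Chains S p` is `C_{p-1}(S; 𝔽₂)`. -/
abbrev Chains (S : Finset (Finset V)) (p : ℕ) : Type _ := faces S p → ZMod 2

/-- Over `𝔽₂` the boundary of a simplex is the sum of its facets, with no orientations. -/
def incidence (S : Finset (Finset V)) (p : ℕ) : Matrix (faces S p) (faces S (p + 1)) (ZMod 2) :=
  Matrix.of fun τ σ => if (τ : Finset V) ⊆ σ then 1 else 0

theorem incidence_apply (S : Finset (Finset V)) (p : ℕ) (τ : faces S p) (σ : faces S (p + 1)) :
    incidence S p τ σ = if (τ : Finset V) ⊆ σ then 1 else 0 :=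
  rfl

def bdry (S : Finset (Finset V)) (p : ℕ) : Chains S (p + 1) →ₗ[ZMod 2] Chains S p :=
  (incidence S p).mulVecLin

theorem finrank_chains {V : Type*} (S : Finset (Finset V)) (p : ℕ) :
    Module.finrank (ZMod 2) (Chains S p) = fm S p := by
  rw [Module.finrank_fintype_fun_eq_card, Fintype.card_coe, fm]

theorem filter_between_eq_image {S : Finset (Finset V)} (hS : IsComplex S) {τ σ : Finset V}
    (hσ : σ ∈ S) (hτσ : τ ⊆ σ) :
    S.filter (fun e => e.card = τ.card + 1 ∧ τ ⊆ e ∧ e ⊆ σ) =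
      (σ \ τ).image fun x => insert x τ := by
  ext e
  simp only [mem_filter, mem_image, mem_sdiff]
  constructor
  · rintro ⟨-, hec, hτe, heσ⟩
    obtain ⟨x, hxτ, rfl⟩ := exists_eq_insert_iff.2 ⟨hτe, hec.symm⟩
    exact ⟨x, ⟨heσ (mem_insert_self x τ), hxτ⟩, rfl⟩
  · rintro ⟨x, ⟨hxσ, hxτ⟩, rfl⟩
    have hsub : insert x τ ⊆ σ := insert_subset hxσ hτσ
    exact ⟨hS σ hσ _ hsub, card_insert_of_notMem hxτ, subset_insert x τ, hsub⟩

theorem card_filter_between {S : Finset (Finset V)} (hS : IsComplex S) {τ σ : Finset V}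
    (hσ : σ ∈ S) (hτσ : τ ⊆ σ) :
    (S.filter fun e => e.card = τ.card + 1 ∧ τ ⊆ e ∧ e ⊆ σ).card = σ.card - τ.card := by
  rw [filter_between_eq_image hS hσ hτσ, card_image_of_injOn, card_sdiff_of_subset hτσ]
  intro x hx y _ hxy
  have : x ∈ insert y τ := by
    rw [← show insert x τ = insert y τ from hxy]
    exact mem_insert_self x τ
  exact (mem_insert.1 this).resolve_right (mem_sdiff.1 hx).2

theorem incidence_mul_incidence {S : Finset (Finset V)} (hS : IsComplex S) (p : ℕ) :
    incidence S p * incidence S (p + 1) = 0 := by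
  ext τ σ
  have hτ := (mem_filter.1 τ.2).2
  have hσ := mem_filter.1 σ.2
  simp only [Matrix.mul_apply, incidence_apply, Matrix.zero_apply, ite_mul, one_mul,
    zero_mul, ← ite_and]
  rw [sum_coe_sort (faces S (p + 1)) fun e => if (τ : Finset V) ⊆ e ∧ e ⊆ σ then 1 else 0,
    sum_boole, filter_filter]
  by_cases hτσ : (τ : Finset V) ⊆ σ
  · have hcard := card_filter_between hS hσ.1 hτσ
    rw [hτ, hσ.2, show p + 1 + 1 - p = 2 by omega] at hcard
    rw [hcard]
    rfl
  · rw [filter_false_of_mem fun e _ h => hτσ (h.2.1.trans h.2.2), card_empty, Nat.cast_zero]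

theorem bdry_comp_bdry {S : Finset (Finset V)} (hS : IsComplex S) (p : ℕ) :
    bdry S p ∘ₗ bdry S (p + 1) = 0 := by
  rw [bdry, bdry, ← Matrix.mulVecLin_mul, incidence_mul_incidence hS, Matrix.mulVecLin_zero]

theorem adjFacet.ne {S : Finset (Finset V)} {n : ℕ} {σ ρ : Finset V} (h : adjFacet S n σ ρ) :
    σ ≠ ρ := by
  rintro rfl
  have := h.2.2.2.2
  rw [inter_self, h.2.2.1] at this
  omega

theorem NonBranching.eq_or_eq_of_adjFacet {S : Finset (Finset V)} {n : ℕ} (hS : IsComplex S)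
    (hnb : NonBranching S n) {σ ρ e : Finset V} (h : adjFacet S n σ ρ) (he : e ∈ S)
    (hec : e.card = n + 1) (hsub : σ ∩ ρ ⊆ e) : e = σ ∨ e = ρ := by
  have hne := h.ne
  obtain ⟨hσ, hρ, hσc, hρc, hc⟩ := h
  have hpair : {σ, ρ} = S.filter fun e => e.card = n + 1 ∧ σ ∩ ρ ⊆ e := by
    refine eq_of_subset_of_card_le (insert_subset ?_ (singleton_subset_iff.2 ?_)) ?_
    · exact mem_filter.2 ⟨hσ, hσc, inter_subset_left⟩
    · exact mem_filter.2 ⟨hρ, hρc, inter_subset_right⟩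
    · rw [hnb _ (hS σ hσ _ inter_subset_left) hc, card_pair hne]
  have he' : e ∈ ({σ, ρ} : Finset (Finset V)) := hpair ▸ mem_filter.2 ⟨he, hec, hsub⟩
  simpa only [mem_insert, mem_singleton] using he'

theorem apply_eq_of_bdry_eq_zero {S : Finset (Finset V)} {n : ℕ} (hS : IsComplex S)
    (hnb : NonBranching S n) {z : Chains S (n + 1)} (hz : bdry S n z = 0)
    {σ ρ : faces S (n + 1)} (h : adjFacet S n σ ρ) : z σ = z ρ := by
  have hτ : (σ : Finset V) ∩ ρ ∈ faces S n :=
    mem_filter.2 ⟨hS _ h.1 _ inter_subset_left, h.2.2.2.2⟩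
  have hne : σ ≠ ρ := fun hσρ => h.ne (congrArg Subtype.val hσρ)
  -- by non-branching, `σ` and `ρ` are the only facets through the ridge `σ ∩ ρ`
  have hsum := congrFun hz ⟨_, hτ⟩
  rw [bdry, Matrix.mulVecLin_apply, Matrix.mulVec, dotProduct, Fintype.sum_eq_add σ ρ hne]
    at hsum
  · simp only [incidence_apply, inter_subset_left, inter_subset_right, if_true,
      one_mul, Pi.zero_apply] at hsum
    rw [add_eq_zero_iff_eq_neg, ZMod.neg_eq_self_mod_two] at hsum
    exact hsum
  · rintro e ⟨heσ, heρ⟩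
    have he := mem_filter.1 e.2
    rw [incidence_apply, if_neg, zero_mul]
    intro hsub
    rcases hnb.eq_or_eq_of_adjFacet hS h he.1 he.2 hsub with h' | h'
    · exact heσ (Subtype.ext h')
    · exact heρ (Subtype.ext h')

theorem apply_eq_of_bdry_eq_zero_of_reflTransGen {S : Finset (Finset V)} {n : ℕ}
    (hS : IsComplex S) (hnb : NonBranching S n) {z : Chains S (n + 1)} (hz : bdry S n z = 0)
    {a b : Finset V} (h : Relation.ReflTransGen (adjFacet S n) a b) (ha : a ∈ faces S (n + 1))
    (hb : b ∈ faces S (n + 1)) : z ⟨a, ha⟩ = z ⟨b, hb⟩ := by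
  induction h with
  | refl => rfl
  | tail _ hbc ih =>
    have hb' : _ ∈ faces S (n + 1) := mem_filter.2 ⟨hbc.1, hbc.2.2.1⟩
    exact (ih hb').trans (apply_eq_of_bdry_eq_zero hS hnb hz (σ := ⟨_, hb'⟩) (ρ := ⟨_, hb⟩) hbc)

theorem finrank_ker_bdry_le_one {S : Finset (Finset V)} {n : ℕ} (hS : IsComplex S)
    (hnb : NonBranching S n) (hsc : StronglyConnected S n) :
    Module.finrank (ZMod 2) (LinearMap.ker (bdry S n)) ≤ 1 := by
  suffices LinearMap.ker (bdry S n) ≤ Submodule.span (ZMod 2) {fun _ => 1} by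
    refine (Submodule.finrank_mono this).trans ((finrank_span_le_card _).trans ?_)
    simp
  intro z hz
  rw [Submodule.mem_span_singleton]
  rcases isEmpty_or_nonempty (faces S (n + 1)) with h | ⟨⟨σ0⟩⟩
  · exact ⟨0, Subsingleton.elim _ _⟩
  refine ⟨z σ0, funext fun σ => ?_⟩
  have hσ0 := mem_filter.1 σ0.2
  have hσ := mem_filter.1 σ.2
  rw [Pi.smul_apply, smul_eq_mul, mul_one]
  exact apply_eq_of_bdry_eq_zero_of_reflTransGen hS hnb hz
    (hsc _ hσ0.1 hσ0.2 _ hσ.1 hσ.2) σ0.2 σ.2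

def vertexChain (S : Finset (Finset V)) (u : V) : Chains S 1 :=
  fun τ => if (τ : Finset V) = {u} then 1 else 0

theorem bdry_single_pair {S : Finset (Finset V)} {u w : V} (he : {u, w} ∈ faces S 2)
    (huw : u ≠ w) : bdry S 1 (Pi.single ⟨{u, w}, he⟩ 1) = vertexChain S u - vertexChain S w := by
  rw [bdry, Matrix.mulVecLin_apply, Matrix.mulVec_single_one]
  funext τ
  obtain ⟨x, hx⟩ := card_eq_one.1 (mem_filter.1 τ.2).2
  simp only [Matrix.col_apply, incidence_apply, vertexChain, Pi.sub_apply, hx,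
    singleton_subset_iff, mem_insert, mem_singleton, singleton_inj]
  by_cases hxu : x = u <;> by_cases hxw : x = w <;> subst_vars
  · exact absurd rfl huw
  all_goals simp [*, Ne.symm huw]

theorem vertexChain_sub_mem_range_of_mem {S : Finset (Finset V)} (hS : IsComplex S)
    {σ : Finset V} (hσ : σ ∈ S) {u w : V} (hu : u ∈ σ) (hw : w ∈ σ) :
    vertexChain S u - vertexChain S w ∈ LinearMap.range (bdry S 1) := by
  rcases eq_or_ne u w with rfl | huw
  · rw [sub_self]
    exact zero_mem _
  have he : {u, w} ∈ faces S 2 :=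
    mem_filter.2 ⟨hS σ hσ _ (insert_subset hu (singleton_subset_iff.2 hw)), card_pair huw⟩
  exact ⟨_, bdry_single_pair he huw⟩

theorem vertexChain_sub_mem_range_of_reflTransGen {S : Finset (Finset V)} {n : ℕ}
    (hS : IsComplex S) (hn : 1 ≤ n) {σ ρ : Finset V}
    (h : Relation.ReflTransGen (adjFacet S n) σ ρ) (hσ : σ ∈ S) {u w : V} (hu : u ∈ σ)
    (hw : w ∈ ρ) : vertexChain S u - vertexChain S w ∈ LinearMap.range (bdry S 1) := by
  induction h generalizing w with
  | refl => exact vertexChain_sub_mem_range_of_mem hS hσ hu hw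
  | @tail b c _ hbc ih =>
    obtain ⟨x, hx⟩ : (b ∩ c).Nonempty := card_pos.1 (by rw [hbc.2.2.2.2]; omega)
    rw [← sub_add_sub_cancel _ (vertexChain S x)]
    exact add_mem (ih (mem_inter.1 hx).1)
      (vertexChain_sub_mem_range_of_mem hS hbc.2.1 (mem_inter.1 hx).2 hw)

theorem vertexChain_sub_mem_range {S : Finset (Finset V)} {n : ℕ} (hS : IsComplex S)
    (hpure : IsPure S n) (hsc : StronglyConnected S n) (hn : 1 ≤ n) {u w : V}
    (hu : {u} ∈ S) (hw : {w} ∈ S) :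
    vertexChain S u - vertexChain S w ∈ LinearMap.range (bdry S 1) := by
  obtain ⟨σ, hσ, huσ, hσc⟩ := hpure _ hu
  obtain ⟨ρ, hρ, hwρ, hρc⟩ := hpure _ hw
  exact vertexChain_sub_mem_range_of_reflTransGen hS hn (hsc σ hσ hσc ρ hρ hρc) hσ
    (singleton_subset_iff.1 huσ) (singleton_subset_iff.1 hwρ)

theorem fm_one_le_finrank_range_bdry_add_one {S : Finset (Finset V)} {n : ℕ}
    (hS : IsComplex S) (hpure : IsPure S n) (hsc : StronglyConnected S n) (hn : 1 ≤ n) :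
    fm S 1 ≤ Module.finrank (ZMod 2) (LinearMap.range (bdry S 1)) + 1 := by
  rcases (faces S 1).eq_empty_or_nonempty with h | ⟨τ0, hτ0⟩
  · have : fm S 1 = 0 := (congrArg card h).trans card_empty
    omega
  obtain ⟨u0, rfl⟩ := card_eq_one.1 (mem_filter.1 hτ0).2
  have hspan : ⊤ ≤ LinearMap.range (bdry S 1) ⊔ Submodule.span (ZMod 2) {vertexChain S u0} := by
    rw [← (Pi.basisFun (ZMod 2) (faces S 1)).span_eq, Submodule.span_le]
    rintro _ ⟨τ, rfl⟩
    obtain ⟨u, hu⟩ := card_eq_one.1 (mem_filter.1 τ.2).2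
    have hτ : Pi.basisFun (ZMod 2) (faces S 1) τ = vertexChain S u := by
      funext τ'
      simp only [Pi.basisFun_apply, vertexChain, ← hu, Pi.single_apply, Subtype.ext_iff]
    rw [SetLike.mem_coe, hτ, ← sub_add_cancel (vertexChain S u) (vertexChain S u0)]
    refine add_mem (Submodule.mem_sup_left ?_)
      (Submodule.mem_sup_right (Submodule.mem_span_singleton_self _))
    exact vertexChain_sub_mem_range hS hpure hsc hn (hu ▸ (mem_filter.1 τ.2).1)
      (mem_filter.1 hτ0).1
  calc fm S 1 = Module.finrank (ZMod 2) (⊤ : Submodule (ZMod 2) (Chains S 1)) := by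
        rw [finrank_top, finrank_chains]
    _ ≤ Module.finrank (ZMod 2)
          ↥(LinearMap.range (bdry S 1) ⊔ Submodule.span (ZMod 2) {vertexChain S u0}) :=
        Submodule.finrank_mono hspan
    _ ≤ Module.finrank (ZMod 2) (LinearMap.range (bdry S 1)) +
          Module.finrank (ZMod 2) (Submodule.span (ZMod 2) {vertexChain S u0}) :=
        Submodule.finrank_add_le_finrank_add_finrank _ _
    _ ≤ Module.finrank (ZMod 2) (LinearMap.range (bdry S 1)) + 1 := by
        grw [finrank_span_le_card]
        simp

theorem chi_le_two_of_pseudoManifold_two {S : Finset (Finset V)} (hS : PseudoManifold S 2) :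
    chi S ≤ 2 := by
  obtain ⟨hcx, hpure, hnb, hsc⟩ := hS
  have hchi : chi S = fm S 1 - fm S 2 + fm S 3 := by
    rw [chi_eq_sum_fm fun _ => hpure.card_le]
    norm_num [sum_range_succ, sub_eq_add_neg]
  have hvert := fm_one_le_finrank_range_bdry_add_one hcx hpure hsc (by norm_num)
  have hcycle := finrank_ker_bdry_le_one hcx hnb hsc
  have hbdry : Module.finrank (ZMod 2) (LinearMap.range (bdry S 2)) ≤
      Module.finrank (ZMod 2) (LinearMap.ker (bdry S 1)) :=
    Submodule.finrank_mono (LinearMap.range_le_ker_iff.2 (bdry_comp_bdry hcx 1))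
  have hrank1 : Module.finrank (ZMod 2) (LinearMap.range (bdry S 1)) +
      Module.finrank (ZMod 2) (LinearMap.ker (bdry S 1)) = fm S 2 :=
    (bdry S 1).finrank_range_add_finrank_ker.trans (finrank_chains S 2)
  have hrank2 : Module.finrank (ZMod 2) (LinearMap.range (bdry S 2)) +
      Module.finrank (ZMod 2) (LinearMap.ker (bdry S 2)) = fm S 3 :=
    (bdry S 2).finrank_range_add_finrank_ker.trans (finrank_chains S 3)
  rw [hchi]
  omega

/-- A 3-dimensional normal simplicial pseudo manifold has
nonnegative Euler characteristic. -/
theorem stmt11 (Δ : Finset (Finset V)) (hpm : PseudoManifold Δ 3)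
    (hnormal : Normal3 Δ) : 0 ≤ chi Δ := by
  obtain ⟨hcx, hpure, hnb, -⟩ := hpm
  have hcard : ∀ σ ∈ Δ, σ.card ≤ 4 := fun _ => hpure.card_le
  have hchi : chi Δ = fm Δ 1 - fm Δ 2 + fm Δ 3 - fm Δ 4 := by
    rw [chi_eq_sum_fm hcard]
    norm_num [sum_range_succ, sub_eq_add_neg]
  have hlinks : ∑ v ∈ verts Δ, chi (lk Δ v) = fm Δ 2 * 2 - fm Δ 3 * 3 + fm Δ 4 * 4 := by
    rw [sum_chi_lk hcx, sum_filter, sum_comp_card_eq_sum_fm hcard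
      fun p => if 2 ≤ p then (p : ℤ) * (-1) ^ (p - 2) else 0]
    norm_num [sum_range_succ, sub_eq_add_neg]
  have hbound : ∑ v ∈ verts Δ, chi (lk Δ v) ≤ 2 * fm Δ 1 :=
    calc ∑ v ∈ verts Δ, chi (lk Δ v) ≤ ∑ _v ∈ verts Δ, 2 :=
          sum_le_sum fun v hv => chi_le_two_of_pseudoManifold_two (hnormal v hv)
      _ = 2 * fm Δ 1 := by rw [sum_const, card_verts_eq_fm_one hcx, nsmul_eq_mul, mul_comm]
  have hridges : fm Δ 3 * 2 = fm Δ 4 * 4 := fm_mul_two_eq hcx hnb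
  omega
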